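/- arXiv:2511.20519 — 3 statements merged into one kernel-verified Lean document; each statement's English description precedes it below -/
import Mathlib

section
/- For all real numbers p ≥ 1 and q ≥ 0 one has Γ(p+q) ≥ Γ(p) · (p−1)^q, where Γ denotes the Gamma function (with the convention 0^0 = 1). -/
/-!
Since `Γ (x + 1) = x Γ x`, the secant of `log ∘ Γ` over `[x, x + 1]` has slope `log x`.
By log-convexity of `Γ`, every secant further to the right, over `[x + 1, x + 1 + q]`,
is at least as steep, which exponentiates to `Γ (x + 1) x ^ q ≤ Γ (x + 1 + q)`; put `x = p - 1`.
-/

namespace Real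

theorem mul_log_le_log_Gamma_add_sub {x q : ℝ} (hx : 0 < x) (hq : 0 < q) :
    q * log x ≤ log (Gamma (x + 1 + q)) - log (Gamma (x + 1)) := by
  have hslope := convexOn_log_Gamma.slope_mono_adjacent (x := x) (y := x + 1) (z := x + 1 + q)
    (Set.mem_Ioi.mpr hx) (Set.mem_Ioi.mpr (by linarith)) (by linarith) (by linarith)
  have hstep : log (Gamma (x + 1)) - log (Gamma x) = log x := by
    rw [Gamma_add_one hx.ne', log_mul hx.ne' (Gamma_pos_of_pos hx).ne']
    ring
  simp only [Function.comp_apply, hstep, add_sub_cancel_left, div_one] at hslope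
  rwa [le_div_iff₀ hq, mul_comm] at hslope

theorem Gamma_add_one_mul_rpow_le_Gamma_add {x q : ℝ} (hx : 0 ≤ x) (hq : 0 ≤ q) :
    Gamma (x + 1) * x ^ q ≤ Gamma (x + 1 + q) := by
  rcases hq.eq_or_lt with rfl | hq
  · simp
  rcases hx.eq_or_lt with rfl | hx
  · rw [zero_rpow hq.ne', mul_zero]
    exact (Gamma_pos_of_pos (by linarith)).le
  have hG : 0 < Gamma (x + 1) := Gamma_pos_of_pos (by linarith)
  rw [← log_le_log_iff (by positivity) (Gamma_pos_of_pos (by linarith)),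
    log_mul hG.ne' (rpow_pos_of_pos hx q).ne', log_rpow hx]
  linarith [mul_log_le_log_Gamma_add_sub hx hq]

end Real

/-- For real `p ≥ 1` and `q ≥ 0` one has `Γ(p+q) ≥ Γ(p)·(p−1)^q`
(with the convention `0^0 = 1`, which holds for `Real.rpow`). -/
theorem gamma_add_ge (p q : ℝ) (hp : 1 ≤ p) (hq : 0 ≤ q) :
    Real.Gamma p * (p - 1) ^ q ≤ Real.Gamma (p + q) := by
  simpa using Real.Gamma_add_one_mul_rpow_le_Gamma_add (x := p - 1) (by linarith) hq
end

section
/- Let p, q > 0, let μ = p/(p+q), and let x ∈ ℝ. Let I_x(p,q) denote the regularized incomplete Beta function, extended by I_x(p,q) = 0 for x < 0 and I_x(p,q) = 1 for x > 1. Then: if x < μ, then I_x(p,q) ≤ 1/( p (x/μ − 1)² ); and if x > μ, then I_x(p,q) ≥ 1 − 1/( p (x/μ − 1)² ). -/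
/-!
Chebyshev's inequality for the Beta(p,q) distribution. Its mean is `μ = p/(p+q)` and its
variance `pq/((p+q)²(p+q+1))` follows from the recursion `B(p+1,q) = p/(p+q) · B(p,q)`, so each
tail beyond `x` has mass at most `pq/((p+q)²(p+q+1)(x-μ)²)`. Since `q/(p+q+1) ≤ 1` this is at most
`p/((p+q)²(x-μ)²) = 1/(p(x/μ-1)²)`.
-/

open MeasureTheory Set ProbabilityTheory

/-- The regularized incomplete Beta function `I_x(p,q) = B_x(p,q)/B(p,q)`,
extended by `0` for `x < 0` and by `1` for `x > 1`. -/
noncomputable def regIncBeta (p q x : ℝ) : ℝ :=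
  (∫ u in Set.Ioo (0 : ℝ) (min x 1), u ^ (p - 1) * (1 - u) ^ (q - 1)) /
    (∫ u in Set.Ioo (0 : ℝ) 1, u ^ (p - 1) * (1 - u) ^ (q - 1))

theorem setIntegral_mul_le_setIntegral_mul_sq {X : Type*} [MeasurableSpace X] {μ : Measure X}
    {f g : X → ℝ} {s t : Set X} {ε : ℝ} (hs : MeasurableSet s) (ht : MeasurableSet t)
    (hts : t ⊆ s) (hf0 : ∀ u ∈ s, 0 ≤ f u) (hf : IntegrableOn f s μ)
    (hfg : IntegrableOn (fun u ↦ f u * g u ^ 2) s μ) (hg : ∀ u ∈ t, ε ≤ g u ^ 2) :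
    (∫ u in t, f u ∂μ) * ε ≤ ∫ u in s, f u * g u ^ 2 ∂μ :=
  calc (∫ u in t, f u ∂μ) * ε = ∫ u in t, f u * ε ∂μ := (integral_mul_const ε _).symm
    _ ≤ ∫ u in t, f u * g u ^ 2 ∂μ :=
      setIntegral_mono_on ((hf.mono_set hts).mul_const ε) (hfg.mono_set hts) ht fun u hu ↦
        mul_le_mul_of_nonneg_left (hg u hu) (hf0 u (hts hu))
    _ ≤ ∫ u in s, f u * g u ^ 2 ∂μ :=
      setIntegral_mono_set hfg
        (ae_restrict_of_forall_mem hs fun u hu ↦ mul_nonneg (hf0 u hu) (sq_nonneg _))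
        hts.eventuallyLE

noncomputable def betaIntegrand (p q u : ℝ) : ℝ := u ^ (p - 1) * (1 - u) ^ (q - 1)

noncomputable def betaVariance (p q : ℝ) : ℝ := p * q / ((p + q) ^ 2 * (p + q + 1))

section BetaIntegrand

variable {p q u : ℝ}

theorem betaIntegrand_nonneg (h0 : 0 ≤ u) (h1 : u ≤ 1) : 0 ≤ betaIntegrand p q u :=
  mul_nonneg (Real.rpow_nonneg h0 _) (Real.rpow_nonneg (sub_nonneg.mpr h1) _)

theorem ofReal_betaIntegrand (h0 : 0 ≤ u) (h1 : u ≤ 1) :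
    (betaIntegrand p q u : ℂ) = (u : ℂ) ^ ((p : ℂ) - 1) * (1 - (u : ℂ)) ^ ((q : ℂ) - 1) := by
  rw [betaIntegrand, Complex.ofReal_mul, Complex.ofReal_cpow h0,
    Complex.ofReal_cpow (sub_nonneg.mpr h1)]
  push_cast
  rfl

theorem betaIntegrand_add_one (hu : 0 < u) :
    betaIntegrand (p + 1) q u = u * betaIntegrand p q u := by
  rw [betaIntegrand, betaIntegrand, add_sub_right_comm, Real.rpow_add_one hu.ne']
  ring

theorem betaIntegrand_mul_sub_sq (hu : 0 < u) (c : ℝ) :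
    betaIntegrand p q u * (u - c) ^ 2 =
      betaIntegrand (p + 1 + 1) q u - 2 * c * betaIntegrand (p + 1) q u
        + c ^ 2 * betaIntegrand p q u := by
  rw [betaIntegrand_add_one hu, betaIntegrand_add_one hu]
  ring

theorem Complex.betaIntegral_ofReal (p q : ℝ) :
    Complex.betaIntegral p q = ↑(∫ u in Ioo (0 : ℝ) 1, betaIntegrand p q u) := by
  rw [Complex.betaIntegral, intervalIntegral.integral_of_le zero_le_one,
    integral_Ioc_eq_integral_Ioo, ← integral_complex_ofReal]
  exact setIntegral_congr_fun measurableSet_Ioo fun u hu ↦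
    (ofReal_betaIntegrand hu.1.le hu.2.le).symm

variable (hp : 0 < p) (hq : 0 < q)
include hp hq

theorem integrableOn_betaIntegrand : IntegrableOn (betaIntegrand p q) (Ioo 0 1) := by
  have hc := ((intervalIntegrable_iff_integrableOn_Ioc_of_le zero_le_one).mp
    (Complex.betaIntegral_convergent (u := p) (v := q) (by simpa) (by simpa))).mono_set
      Ioo_subset_Ioc_self
  have hr : IntegrableOn (fun u ↦ (betaIntegrand p q u : ℂ)) (Ioo 0 1) :=
    hc.congr_fun (fun u hu ↦ (ofReal_betaIntegrand hu.1.le hu.2.le).symm) measurableSet_Ioo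
  simpa [IntegrableOn] using hr.re

theorem integral_betaIntegrand : ∫ u in Ioo (0 : ℝ) 1, betaIntegrand p q u = beta p q := by
  rw [beta_eq_betaIntegralReal p q hp hq, Complex.betaIntegral_ofReal, Complex.ofReal_re]

theorem beta_add_one_left : beta (p + 1) q = p / (p + q) * beta p q := by
  have hpq : p + q ≠ 0 := by positivity
  rw [beta, beta, Real.Gamma_add_one hp.ne', add_right_comm, Real.Gamma_add_one hpq]
  have := Real.Gamma_pos_of_pos (add_pos hp hq)
  field_simp

theorem integrableOn_betaIntegrand_mul_sub_sq (c : ℝ) :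
    IntegrableOn (fun u ↦ betaIntegrand p q u * (u - c) ^ 2) (Ioo 0 1) := by
  refine IntegrableOn.congr_fun ?_ (fun u hu ↦ (betaIntegrand_mul_sub_sq hu.1 c).symm)
    measurableSet_Ioo
  exact ((integrableOn_betaIntegrand (by positivity) hq).sub
    ((integrableOn_betaIntegrand (by positivity) hq).const_mul _)).add
      ((integrableOn_betaIntegrand hp hq).const_mul _)

theorem integral_betaIntegrand_mul_sub_mean_sq :
    ∫ u in Ioo (0 : ℝ) 1, betaIntegrand p q u * (u - p / (p + q)) ^ 2 =
      betaVariance p q * beta p q := by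
  have hp1 : 0 < p + 1 := by positivity
  have hI {r : ℝ} (hr : 0 < r) := integrableOn_betaIntegrand hr hq
  rw [setIntegral_congr_fun measurableSet_Ioo fun u hu ↦ betaIntegrand_mul_sub_sq hu.1 _,
    integral_add, integral_sub, integral_const_mul, integral_const_mul,
    integral_betaIntegrand (by positivity) hq, integral_betaIntegrand hp1 hq,
    integral_betaIntegrand hp hq, beta_add_one_left hp1 hq, beta_add_one_left hp hq, betaVariance]
  · have : 0 < p + q := by positivity
    field_simp
    ring
  · exact hI (by positivity)
  · exact (hI hp1).const_mul _
  · exact (hI (by positivity)).sub ((hI hp1).const_mul _)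
  · exact (hI hp).const_mul _

end BetaIntegrand

section Tails

variable {p q x : ℝ} (hp : 0 < p) (hq : 0 < q)
include hp hq

theorem regIncBeta_eq_div_beta :
    regIncBeta p q x = (∫ u in Ioo (0 : ℝ) (min x 1), betaIntegrand p q u) / beta p q := by
  rw [← integral_betaIntegrand hp hq]
  rfl

theorem betaVariance_div_sq_le (hx : x ≠ p / (p + q)) :
    betaVariance p q / (x - p / (p + q)) ^ 2 ≤ 1 / (p * (x / (p / (p + q)) - 1) ^ 2) := by
  have hpq : 0 < p + q := by positivity
  have hd : 0 < (x - p / (p + q)) ^ 2 := by positivity [sub_ne_zero.mpr hx]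
  have hvar : betaVariance p q ≤ p / (p + q) ^ 2 := by
    rw [betaVariance, div_le_div_iff₀ (by positivity) (by positivity)]
    nlinarith [mul_pos (mul_pos hp hpq) hpq]
  calc betaVariance p q / (x - p / (p + q)) ^ 2 ≤ p / (p + q) ^ 2 / (x - p / (p + q)) ^ 2 := by
        gcongr
    _ = 1 / (p * (x / (p / (p + q)) - 1) ^ 2) := by
        field_simp

theorem regIncBeta_le_betaVariance_div_sq (hx : x < p / (p + q)) :
    regIncBeta p q x ≤ betaVariance p q / (x - p / (p + q)) ^ 2 := by
  have hd : 0 < (x - p / (p + q)) ^ 2 := by positivity [sub_ne_zero.mpr hx.ne]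
  have hchebyshev := setIntegral_mul_le_setIntegral_mul_sq (g := fun u ↦ u - p / (p + q))
    (ε := (x - p / (p + q)) ^ 2) measurableSet_Ioo measurableSet_Ioo (Ioo_subset_Ioo_right (min_le_right x 1))
    (fun u hu ↦ betaIntegrand_nonneg hu.1.le hu.2.le) (integrableOn_betaIntegrand hp hq)
    (integrableOn_betaIntegrand_mul_sub_sq hp hq _)
    fun u hu ↦ by nlinarith [hu.2.trans_le (min_le_left x 1)]
  rw [integral_betaIntegrand_mul_sub_mean_sq hp hq] at hchebyshev
  rw [regIncBeta_eq_div_beta hp hq, div_le_div_iff₀ (beta_pos hp hq) hd]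
  exact hchebyshev

theorem one_sub_regIncBeta_le_betaVariance_div_sq (hx : p / (p + q) < x) :
    1 - regIncBeta p q x ≤ betaVariance p q / (x - p / (p + q)) ^ 2 := by
  have hd : 0 < (x - p / (p + q)) ^ 2 := by positivity [sub_ne_zero.mpr hx.ne']
  have hm : 0 < min x 1 := lt_min ((by positivity : 0 < p / (p + q)).trans hx) one_pos
  have hint := integrableOn_betaIntegrand hp hq
  have hsplit : beta p q - ∫ u in Ioo (0 : ℝ) (min x 1), betaIntegrand p q u
      = ∫ u in Ico (min x 1) 1, betaIntegrand p q u := by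
    rw [sub_eq_iff_eq_add', ← integral_betaIntegrand hp hq, ← setIntegral_union
      (disjoint_left.mpr fun u hu hu' ↦ hu.2.not_ge hu'.1) measurableSet_Ico
      (hint.mono_set (Ioo_subset_Ioo_right (min_le_right x 1)))
      (hint.mono_set (Ico_subset_Ioo_left hm)), Ioo_union_Ico_eq_Ioo hm (min_le_right x 1)]
  have hchebyshev := setIntegral_mul_le_setIntegral_mul_sq (g := fun u ↦ u - p / (p + q))
    (ε := (x - p / (p + q)) ^ 2) measurableSet_Ioo measurableSet_Ico (Ico_subset_Ioo_left hm)
    (fun u hu ↦ betaIntegrand_nonneg hu.1.le hu.2.le) hint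
    (integrableOn_betaIntegrand_mul_sub_sq hp hq _)
    fun u hu ↦ by
      have : x ≤ u := (min_le_iff.mp hu.1).resolve_right hu.2.not_ge
      nlinarith
  rw [integral_betaIntegrand_mul_sub_mean_sq hp hq] at hchebyshev
  rw [regIncBeta_eq_div_beta hp hq, one_sub_div (beta_pos hp hq).ne',
    div_le_div_iff₀ (beta_pos hp hq) hd, hsplit]
  exact hchebyshev

end Tails

/-- Chebyshev-type bounds for the regularized incomplete Beta function: with
`μ = p/(p+q)`, one has `I_x(p,q) ≤ 1/(p (x/μ − 1)²)` for `x < μ` and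
`I_x(p,q) ≥ 1 − 1/(p (x/μ − 1)²)` for `x > μ`. -/
theorem regIncBeta_chebyshev (p q x : ℝ) (hp : 0 < p) (hq : 0 < q) :
    (x < p / (p + q) → regIncBeta p q x ≤ 1 / (p * (x / (p / (p + q)) - 1) ^ 2)) ∧
    (p / (p + q) < x → 1 - 1 / (p * (x / (p / (p + q)) - 1) ^ 2) ≤ regIncBeta p q x) := by
  refine ⟨fun hx ↦ ?_, fun hx ↦ ?_⟩
  · exact (regIncBeta_le_betaVariance_div_sq hp hq hx).trans
      (betaVariance_div_sq_le hp hq hx.ne)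
  · linarith [one_sub_regIncBeta_le_betaVariance_div_sq hp hq hx,
      betaVariance_div_sq_le hp hq hx.ne']
end

section
/- Let (d,k) be an admissible pair of integers. Then ∫_0^1 x² f_{d,k}(x) dx = π^{(d−k)/2} · Γ((2k−d−1)/2) / Γ((k−1)/2). -/
/-! The substitution `x = u ^ ((k - 1) / 2)` linearises the factor `1 - x ^ (2 / (k - 1))`, and
turns `x² f_{d,k}(x) dx` into `π^b / Γ(b) · u^(a-1) (1 - u)^(b-1) du` with `a = (2k - d - 1) / 2`,
`b = (d - k) / 2`. The integral is therefore `π^b / Γ(b)` times the Beta function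
`B(a, b) = Γ(a) Γ(b) / Γ(a + b)`, and `a + b = (k - 1) / 2`. -/

open MeasureTheory

/-- The Lévy density `f_{d,k}(x) = (ω_{d−k}/(k−1)) x^{−1−(d−1)/(k−1)} (1−x^{2/(k−1)})^{(d−k)/2−1}`
on `(0,1)`, where `ω_b = 2π^{b/2}/Γ(b/2)`. -/
noncomputable def levyDensity (d k : ℕ) (x : ℝ) : ℝ :=
  2 * Real.pi ^ (((d : ℝ) - k) / 2) / Real.Gamma (((d : ℝ) - k) / 2) / ((k : ℝ) - 1) *
    x ^ (-1 - ((d : ℝ) - 1) / ((k : ℝ) - 1)) *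
    (1 - x ^ (2 / ((k : ℝ) - 1))) ^ (((d : ℝ) - k) / 2 - 1)

open Set Real

theorem integral_Ioo_rpow_mul_one_sub_rpow {a b : ℝ} (ha : 0 < a) (hb : 0 < b) :
    ∫ x in Ioo (0 : ℝ) 1, x ^ (a - 1) * (1 - x) ^ (b - 1) = ProbabilityTheory.beta a b := by
  have hreal : Complex.betaIntegral a b =
      ((∫ x in (0 : ℝ)..1, x ^ (a - 1) * (1 - x) ^ (b - 1) : ℝ) : ℂ) := by
    rw [Complex.betaIntegral, ← intervalIntegral.integral_ofReal]
    refine intervalIntegral.integral_congr fun x hx ↦ ?_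
    rw [uIcc_of_le zero_le_one] at hx
    push_cast [Complex.ofReal_cpow hx.1, Complex.ofReal_cpow (sub_nonneg.2 hx.2)]
    rfl
  rw [ProbabilityTheory.beta_eq_betaIntegralReal a b ha hb, hreal, Complex.ofReal_re,
    intervalIntegral.integral_of_le zero_le_one, integral_Ioc_eq_integral_Ioo]

theorem integral_comp_rpow_Ioo_zero_one {E : Type*} [NormedAddCommGroup E] [NormedSpace ℝ E]
    (g : ℝ → E) {p : ℝ} (hp : 0 < p) :
    ∫ x in Ioo (0 : ℝ) 1, (p * x ^ (p - 1)) • g (x ^ p) = ∫ y in Ioo (0 : ℝ) 1, g y := by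
  have himage : (· ^ p) '' Ioo (0 : ℝ) 1 = Ioo 0 1 := by
    ext y
    refine ⟨?_, fun hy ↦ ⟨y ^ p⁻¹,
      ⟨rpow_pos_of_pos hy.1 _, rpow_lt_one hy.1.le hy.2 (inv_pos.2 hp)⟩, ?_⟩⟩
    · rintro ⟨x, ⟨hx0, hx1⟩, rfl⟩
      exact ⟨rpow_pos_of_pos hx0 p, rpow_lt_one hx0.le hx1 hp⟩
    · simp [← rpow_mul hy.1.le, hp.ne']
  conv_rhs => rw [← himage]
  rw [integral_image_eq_integral_abs_deriv_smul measurableSet_Ioo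
    (fun x hx ↦ (hasDerivAt_rpow_const (Or.inl hx.1.ne')).hasDerivWithinAt)
    ((rpow_left_injOn hp.ne').mono fun x (hx : x ∈ Ioo (0 : ℝ) 1) ↦ hx.1.le) g]
  refine setIntegral_congr_fun measurableSet_Ioo fun x (hx : x ∈ Ioo (0 : ℝ) 1) ↦ ?_
  rw [abs_of_pos (mul_pos hp (rpow_pos_of_pos hx.1 _))]

theorem mul_sq_mul_levyDensity_comp_rpow {d k : ℕ} (hk : 1 < k) {u : ℝ} (hu : 0 < u) :
    (((k : ℝ) - 1) / 2 * u ^ (((k : ℝ) - 1) / 2 - 1)) *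
        ((u ^ (((k : ℝ) - 1) / 2)) ^ 2 * levyDensity d k (u ^ (((k : ℝ) - 1) / 2))) =
      π ^ (((d : ℝ) - k) / 2) / Gamma (((d : ℝ) - k) / 2) *
        (u ^ ((2 * (k : ℝ) - d - 1) / 2 - 1) * (1 - u) ^ (((d : ℝ) - k) / 2 - 1)) := by
  have hm : (k : ℝ) - 1 ≠ 0 := sub_ne_zero.2 (by exact_mod_cast hk.ne')
  have hinv : (u ^ (((k : ℝ) - 1) / 2)) ^ (2 / ((k : ℝ) - 1)) = u := by
    rw [← rpow_mul hu.le, div_mul_div_comm, mul_comm, div_self (mul_ne_zero two_ne_zero hm),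
      rpow_one]
  -- exponents of `u` contributed by the Jacobian, by `x ^ 2` and by the power of `x` in the density
  have hexp : (2 * (k : ℝ) - d - 1) / 2 - 1 = (((k : ℝ) - 1) / 2 - 1) + ((k : ℝ) - 1) / 2 * 2 +
      ((k : ℝ) - 1) / 2 * (-1 - ((d : ℝ) - 1) / ((k : ℝ) - 1)) := by
    field_simp
    ring
  rw [levyDensity, hinv, ← rpow_two, ← rpow_mul hu.le, ← rpow_mul hu.le, hexp,
    rpow_add hu, rpow_add hu]
  field_simp

theorem secondMoment_levyDensity_general (d k : ℕ)
    (hkd : k + 1 ≤ d) (hadm : d + 1 < 2 * k) :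
    ∫ x in Set.Ioo (0 : ℝ) 1, x ^ 2 * levyDensity d k x =
      Real.pi ^ (((d : ℝ) - k) / 2) * Real.Gamma ((2 * (k : ℝ) - d - 1) / 2) /
        Real.Gamma (((k : ℝ) - 1) / 2) := by
  have hk : 1 < k := by omega
  have hp : 0 < ((k : ℝ) - 1) / 2 := by
    have : (1 : ℝ) < k := by exact_mod_cast hk
    linarith
  have ha : 0 < (2 * (k : ℝ) - d - 1) / 2 := by
    have : (d : ℝ) + 1 < 2 * k := by exact_mod_cast hadm
    linarith
  have hb : 0 < ((d : ℝ) - k) / 2 := by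
    have : (k : ℝ) + 1 ≤ d := by exact_mod_cast hkd
    linarith
  rw [← integral_comp_rpow_Ioo_zero_one (fun x ↦ x ^ 2 * levyDensity d k x) hp]
  simp only [smul_eq_mul]
  rw [setIntegral_congr_fun measurableSet_Ioo
      fun u hu ↦ mul_sq_mul_levyDensity_comp_rpow hk hu.1,
    integral_const_mul, integral_Ioo_rpow_mul_one_sub_rpow ha hb, ProbabilityTheory.beta]
  have hsum : (2 * (k : ℝ) - d - 1) / 2 + ((d : ℝ) - k) / 2 = ((k : ℝ) - 1) / 2 := by ring
  rw [hsum]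
  field_simp [(Gamma_pos_of_pos hb).ne']

/-- For an admissible pair `(d,k)` (i.e. `1 ≤ k ≤ d−1` and `2k > d+1`), the second moment of the
Lévy measure is `∫_0^1 x² f_{d,k}(x) dx = π^{(d−k)/2} Γ((2k−d−1)/2)/Γ((k−1)/2)`. -/
theorem secondMoment_levyDensity (d k : ℕ)
    (hk : 1 ≤ k) (hkd : k + 1 ≤ d) (hadm : d + 1 < 2 * k) :
    ∫ x in Set.Ioo (0 : ℝ) 1, x ^ 2 * levyDensity d k x =
      Real.pi ^ (((d : ℝ) - k) / 2) * Real.Gamma ((2 * (k : ℝ) - d - 1) / 2) /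
        Real.Gamma (((k : ℝ) - 1) / 2) :=
  secondMoment_levyDensity_general d k hkd hadm
end
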